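/- Let σ(t)=1/(1+e^{-t}) and γ(a)=log(a/(1-a)). For any a, a₀ ∈ (0,1) and b, b₀ ∈ ℝ, |σ(γ(a)+b) − σ(γ(a₀)+b₀)| ≤ |a−a₀|·e^{max(|b|,|b₀|)} + |b−b₀|. -/

import Mathlib

/-!
Split the difference at `σ(γ(a₀) + b)`. In the `b`-direction the sigmoid is `1`-Lipschitz, since
`σ' = σ (1 - σ) ≤ 1`. In the `a`-direction, `σ(γ(a) + b) = a u / (1 - a + a u)` with `u = e^b`, so
the difference is `u (a - a₀) / (D D₀)`; each denominator is a convex combination of `1` and `u`,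
hence at least `min 1 u`, and `u = e^{|b|} (min 1 u)²`.
-/

noncomputable def sigmoid (t : ℝ) : ℝ := 1 / (1 + Real.exp (-t))

noncomputable def logit (a : ℝ) : ℝ := Real.log (a / (1 - a))

open Real hiding sigmoid
open Set

lemma sigmoid_eq_real_sigmoid : sigmoid = Real.sigmoid :=
  funext fun t => by rw [sigmoid, Real.sigmoid_def, one_div]

lemma lipschitzWith_one_sigmoid : LipschitzWith 1 sigmoid := by
  rw [sigmoid_eq_real_sigmoid]
  refine lipschitzWith_of_nnnorm_deriv_le differentiable_sigmoid fun t => ?_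
  have h₀ := Real.sigmoid_nonneg t
  have h₁ := Real.sigmoid_le_one t
  rw [deriv_sigmoid, ← NNReal.coe_le_coe, coe_nnnorm, Real.norm_eq_abs,
    abs_of_nonneg (by nlinarith), NNReal.coe_one]
  nlinarith

lemma abs_sigmoid_sub_sigmoid_le (x y : ℝ) : |sigmoid x - sigmoid y| ≤ |x - y| := by
  simpa [Real.dist_eq] using lipschitzWith_one_sigmoid.dist_le_mul x y

lemma sigmoid_logit_add {a : ℝ} (ha : a ∈ Ioo 0 1) (b : ℝ) :
    sigmoid (logit a + b) = a * exp b / (1 - a + a * exp b) := by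
  obtain ⟨ha₀, ha₁⟩ := ha
  have hodds : 0 < a / (1 - a) := div_pos ha₀ (by linarith)
  have : 1 - a ≠ 0 := by linarith
  rw [sigmoid, logit, neg_add, exp_add, exp_neg, exp_neg, exp_log hodds]
  field_simp
  ring

lemma exp_eq_exp_abs_mul_min_one_exp_sq (b : ℝ) : exp b = exp |b| * min 1 (exp b) ^ 2 := by
  rcases le_total 0 b with hb | hb
  · rw [abs_of_nonneg hb, min_eq_left (one_le_exp hb), one_pow, mul_one]
  · rw [abs_of_nonpos hb, min_eq_right (exp_le_one_iff.mpr hb), sq, ← mul_assoc, ← exp_add,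
      neg_add_cancel, exp_zero, one_mul]

lemma min_one_le_one_sub_add_mul {a : ℝ} (ha : a ∈ Icc 0 1) (u : ℝ) :
    min 1 u ≤ 1 - a + a * u := by
  obtain ⟨ha₀, ha₁⟩ := ha
  nlinarith [min_le_left 1 u, min_le_right 1 u]

lemma abs_mul_exp_div_sub_le {a a₀ : ℝ} (ha : a ∈ Icc 0 1) (ha₀ : a₀ ∈ Icc 0 1) (b : ℝ) :
    |a * exp b / (1 - a + a * exp b) - a₀ * exp b / (1 - a₀ + a₀ * exp b)|
      ≤ |a - a₀| * exp |b| := by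
  set u := exp b
  set m := min 1 u
  have hm : 0 < m := lt_min one_pos (exp_pos b)
  have hD : m ≤ 1 - a + a * u := min_one_le_one_sub_add_mul ha u
  have hD₀ : m ≤ 1 - a₀ + a₀ * u := min_one_le_one_sub_add_mul ha₀ u
  have hDD₀ : 0 < (1 - a + a * u) * (1 - a₀ + a₀ * u) :=
    mul_pos (hm.trans_le hD) (hm.trans_le hD₀)
  have hdiff : a * u / (1 - a + a * u) - a₀ * u / (1 - a₀ + a₀ * u)
      = (a - a₀) * u / ((1 - a + a * u) * (1 - a₀ + a₀ * u)) := by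
    rw [div_sub_div _ _ (hm.trans_le hD).ne' (hm.trans_le hD₀).ne']
    ring
  rw [hdiff, abs_div, abs_mul, abs_of_pos (exp_pos b), abs_of_pos hDD₀, div_le_iff₀ hDD₀,
    exp_eq_exp_abs_mul_min_one_exp_sq b, mul_assoc]
  gcongr
  rw [sq]
  exact mul_le_mul hD hD₀ hm.le (hm.le.trans hD)

theorem sigmoid_logit_lipschitz_bound (a a₀ b b₀ : ℝ)
    (ha : a ∈ Set.Ioo (0:ℝ) 1) (ha₀ : a₀ ∈ Set.Ioo (0:ℝ) 1) :
    |sigmoid (logit a + b) - sigmoid (logit a₀ + b₀)|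
      ≤ |a - a₀| * Real.exp (max |b| |b₀|) + |b - b₀| := by
  have hstep_a : |sigmoid (logit a + b) - sigmoid (logit a₀ + b)| ≤ |a - a₀| * exp |b| := by
    rw [sigmoid_logit_add ha, sigmoid_logit_add ha₀]
    exact abs_mul_exp_div_sub_le (Ioo_subset_Icc_self ha) (Ioo_subset_Icc_self ha₀) b
  have hstep_b : |sigmoid (logit a₀ + b) - sigmoid (logit a₀ + b₀)| ≤ |b - b₀| := by
    simpa using abs_sigmoid_sub_sigmoid_le (logit a₀ + b) (logit a₀ + b₀)
  calc |sigmoid (logit a + b) - sigmoid (logit a₀ + b₀)|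
      ≤ |sigmoid (logit a + b) - sigmoid (logit a₀ + b)|
        + |sigmoid (logit a₀ + b) - sigmoid (logit a₀ + b₀)| := abs_sub_le _ _ _
    _ ≤ |a - a₀| * exp |b| + |b - b₀| := add_le_add hstep_a hstep_b
    _ ≤ |a - a₀| * exp (max |b| |b₀|) + |b - b₀| := by gcongr; exact le_max_left _ _
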